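/- Let ρ : ℝ² → ℝ be twice continuously differentiable and let f₁, f₂ : ℝ → ℝ be arbitrary functions. Define L₁₂₁(x¹,x²) := e^{2ρ(x¹,x²)} f₁(x¹) − (1/4) e^{2ρ(x¹,x²)} ∂₁ρ(x¹,x²) and L₁₂₂(x¹,x²) := e^{2ρ(x¹,x²)} f₂(x²) + (1/4) e^{2ρ(x¹,x²)} ∂₂ρ(x¹,x²). Then at every point of ℝ² the two equations (E1) −e^{2ρ}∂₁∂₂ρ + 4L₁₂₁∂₂ρ − 4L₁₂₂∂₁ρ − 2∂₂L₁₂₁ + 2∂₁L₁₂₂ = 0 and (E2) 2L₁₂₁∂₂ρ + 2L₁₂₂∂₁ρ − ∂₂L₁₂₁ − ∂₁L₁₂₂ = 0 hold. -/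

import Mathlib

/-!
Both potentials have the form `e^{2ρ} (g(xʲ) + c ∂ⱼρ)` with `g` a function of the other
coordinate only, so their cross derivatives follow from the product and chain rules even
though `f₁`, `f₂` are arbitrary. Substituting them, (E1) and (E2) become polynomial identities
in `e^{2ρ}`, `f₁`, `f₂`, `∂₁ρ`, `∂₂ρ` and the two mixed second derivatives, which hold once
the mixed derivatives are identified by the symmetry of second derivatives of a `C²` function.
-/

/-- Partial derivative of `f : ℝ² → ℝ` with respect to the `i`-th coordinate,
taken as the derivative along the corresponding coordinate line. -/
noncomputable def pd (i : Fin 2) (f : (Fin 2 → ℝ) → ℝ) : (Fin 2 → ℝ) → ℝ :=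
  fun x => deriv (fun t => f (Function.update x i t)) (x i)

section PartialDerivative

variable {f : (Fin 2 → ℝ) → ℝ} {x : Fin 2 → ℝ}

theorem hasDerivAt_update_fderiv (hf : DifferentiableAt ℝ f x) (i : Fin 2) :
    HasDerivAt (fun t => f (Function.update x i t)) (fderiv ℝ f x (Pi.single i 1)) (x i) := by
  have hf' : HasFDerivAt f (fderiv ℝ f x) (Function.update x i (x i)) := by
    rw [Function.update_eq_self]
    exact hf.hasFDerivAt
  exact hf'.comp_hasDerivAt (x i) (hasDerivAt_update x i (x i))

theorem pd_eq_fderiv (hf : DifferentiableAt ℝ f x) (i : Fin 2) :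
    pd i f x = fderiv ℝ f x (Pi.single i 1) :=
  (hasDerivAt_update_fderiv hf i).deriv

theorem hasDerivAt_update_pd (hf : DifferentiableAt ℝ f x) (i : Fin 2) :
    HasDerivAt (fun t => f (Function.update x i t)) (pd i f x) (x i) := by
  rw [pd_eq_fderiv hf]
  exact hasDerivAt_update_fderiv hf i

theorem contDiff_pd {n : WithTop ℕ∞} (hf : ContDiff ℝ (n + 1) f) (i : Fin 2) :
    ContDiff ℝ n (pd i f) := by
  have hpd : pd i f = fun y => fderiv ℝ f y (Pi.single i 1) :=
    funext fun y => pd_eq_fderiv ((hf.differentiable (by simp)) y) i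
  rw [hpd]
  exact (hf.fderiv_right le_rfl).clm_apply contDiff_const

theorem pd_pd_eq_fderiv_fderiv (hf : ContDiff ℝ 2 f) (i j : Fin 2) (x : Fin 2 → ℝ) :
    pd i (pd j f) x = fderiv ℝ (fderiv ℝ f) x (Pi.single i 1) (Pi.single j 1) := by
  have hf' : Differentiable ℝ (fderiv ℝ f) :=
    (hf.fderiv_right (m := 1) le_rfl).differentiable one_ne_zero
  have hpd : pd j f = fun y => fderiv ℝ f y (Pi.single j 1) :=
    funext fun y => pd_eq_fderiv ((hf.differentiable two_ne_zero) y) j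
  rw [pd_eq_fderiv ((contDiff_pd (n := 1) hf j).differentiable one_ne_zero x), hpd,
    fderiv_clm_apply (hf' x) (differentiableAt_const _)]
  simp

theorem pd_comm (hf : ContDiff ℝ 2 f) (i j : Fin 2) (x : Fin 2 → ℝ) :
    pd i (pd j f) x = pd j (pd i f) x := by
  rw [pd_pd_eq_fderiv_fderiv hf, pd_pd_eq_fderiv_fderiv hf]
  exact (hf.contDiffAt.isSymmSndFDerivAt (by simp)) _ _

end PartialDerivative

theorem pd_exp_two_mul_mul {ρ h : (Fin 2 → ℝ) → ℝ} {x : Fin 2 → ℝ} {i : Fin 2} {h' : ℝ}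
    (hρ : DifferentiableAt ℝ ρ x)
    (hh : HasDerivAt (fun t => h (Function.update x i t)) h' (x i)) :
    pd i (fun y => Real.exp (2 * ρ y) * h y) x
      = Real.exp (2 * ρ x) * (2 * pd i ρ x * h x + h') := by
  have hexp := ((hasDerivAt_update_pd hρ i).const_mul 2).exp
  refine ((hexp.mul hh).congr_deriv ?_).deriv
  simp only [Function.update_eq_self]
  ring

theorem pd_exp_two_mul_mul_add_pd {ρ : (Fin 2 → ℝ) → ℝ} (hρ : ContDiff ℝ 2 ρ) (g : ℝ → ℝ)
    (c : ℝ) {i j : Fin 2} (hij : i ≠ j) (x : Fin 2 → ℝ) :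
    pd i (fun y => Real.exp (2 * ρ y) * (g (y j) + c * pd j ρ y)) x
      = Real.exp (2 * ρ x)
          * (2 * pd i ρ x * (g (x j) + c * pd j ρ x) + c * pd i (pd j ρ) x) := by
  have hline : HasDerivAt
      (fun t => g (Function.update x i t j) + c * pd j ρ (Function.update x i t))
      (0 + c * pd i (pd j ρ) x) (x i) := by
    simp only [Function.update_of_ne hij.symm]
    have hpdj := (contDiff_pd (n := 1) hρ j).differentiable one_ne_zero x
    exact (hasDerivAt_const _ _).add ((hasDerivAt_update_pd hpdj i).const_mul c)
  rw [pd_exp_two_mul_mul (hρ.differentiable two_ne_zero x) hline, zero_add]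

/-- Coordinate `xⁱ` corresponds to index `i - 1 : Fin 2`. -/
theorem riemann_lanczos_2d_solution_check
    (ρ : (Fin 2 → ℝ) → ℝ) (hρ : ContDiff ℝ 2 ρ)
    (f₁ f₂ : ℝ → ℝ)
    (L121 L122 : (Fin 2 → ℝ) → ℝ)
    (hL121 : ∀ x : Fin 2 → ℝ,
      L121 x = Real.exp (2 * ρ x) * f₁ (x 0)
        - (1/4) * Real.exp (2 * ρ x) * pd 0 ρ x)
    (hL122 : ∀ x : Fin 2 → ℝ,
      L122 x = Real.exp (2 * ρ x) * f₂ (x 1)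
        + (1/4) * Real.exp (2 * ρ x) * pd 1 ρ x) :
    (∀ x : Fin 2 → ℝ,
      -Real.exp (2 * ρ x) * pd 0 (pd 1 ρ) x + 4 * L121 x * pd 1 ρ x
        - 4 * L122 x * pd 0 ρ x - 2 * pd 1 L121 x + 2 * pd 0 L122 x = 0) ∧
    (∀ x : Fin 2 → ℝ,
      2 * L121 x * pd 1 ρ x + 2 * L122 x * pd 0 ρ x
        - pd 1 L121 x - pd 0 L122 x = 0) := by
  have hL121' : L121 = fun y => Real.exp (2 * ρ y) * (f₁ (y 0) + (-1/4) * pd 0 ρ y) :=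
    funext fun y => by rw [hL121]; ring
  have hL122' : L122 = fun y => Real.exp (2 * ρ y) * (f₂ (y 1) + 1/4 * pd 1 ρ y) :=
    funext fun y => by rw [hL122]; ring
  have hpd1L121 x := pd_exp_two_mul_mul_add_pd hρ f₁ (-1/4) (i := 1) (j := 0) (by decide) x
  have hpd0L122 x := pd_exp_two_mul_mul_add_pd hρ f₂ (1/4) (i := 0) (j := 1) (by decide) x
  rw [← hL121'] at hpd1L121
  rw [← hL122'] at hpd0L122
  refine ⟨fun x => ?_, fun x => ?_⟩ <;>
    rw [hpd1L121, hpd0L122, hL121, hL122, pd_comm hρ 1 0] <;> ring
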